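/- For every n ≥ 3, let ψ be the normalized n-qubit state with coefficients ψ i = 2^{-n/2} for every bit string i ≠ (1,1,…,1) and ψ(1,1,…,1) = i · 2^{-n/2} (imaginary unit), i.e. ψ = U_{1…n}(π/2)|+⟩^{⊗n} where U_{1…n}(π/2) multiplies the |1…1⟩ coefficient by e^{iπ/2}. Then ψ is not LU-equivalent to its complex conjugate ψ*: there exist no 2×2 complex unitary matrices U₁, …, U_n with ψ = (⊗_k U_k) ψ*, where ψ* i = conj(ψ i). -/
import Mathlib


open Complex Matrix

/-- Action of a local unitary `⊗ₖ U k` on an `n`-qubit state. -/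
noncomputable def luApply {n : ℕ} (U : Fin n → Matrix (Fin 2) (Fin 2) ℂ)
    (ψ : (Fin n → Fin 2) → ℂ) : (Fin n → Fin 2) → ℂ :=
  fun i => ∑ j : Fin n → Fin 2, (∏ k, U k (i k) (j k)) * ψ j

/-- The state `U_{1…n}(π/2)|+⟩^{⊗n}`: all coefficients are `2^{-n/2}` except at the
all-ones string where the coefficient is `i·2^{-n/2}`. -/
noncomputable def phaseGateState (n : ℕ) : (Fin n → Fin 2) → ℂ := fun i =>
  if i = (fun _ => 1) then Complex.I * ((((2 : ℝ) ^ ((n : ℝ) / 2))⁻¹ : ℝ) : ℂ)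
  else ((((2 : ℝ) ^ ((n : ℝ) / 2))⁻¹ : ℝ) : ℂ)

/-- First "row-sum" vector of a local matrix. -/
private def xv {n : ℕ} (U : Fin n → Matrix (Fin 2) (Fin 2) ℂ) (k : Fin n) (a : Fin 2) : ℂ :=
  U k a 0 + U k a 1

/-- Second-column vector of a local matrix. -/
private def yv {n : ℕ} (U : Fin n → Matrix (Fin 2) (Fin 2) ℂ) (k : Fin n) (a : Fin 2) : ℂ :=
  U k a 1

private lemma prod_update_aux {n : ℕ} (s : Finset (Fin n)) (f : Fin n → Fin 2 → ℂ)
    (i : Fin n → Fin 2) (k : Fin n) (a : Fin 2) (hk : k ∈ s) :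
    ∏ l ∈ s, f l (Function.update i k a l)
      = f k a * ∏ l ∈ s.erase k, f l (i l) := by
  have h1 : ∀ l, f l (Function.update i k a l)
      = Function.update (fun l => f l (i l)) k (f k a) l := by
    intro l
    rcases eq_or_ne l k with rfl | h
    · simp
    · simp [Function.update_of_ne h]
  rw [Finset.prod_congr rfl (fun l _ => h1 l), Finset.prod_update_of_mem hk, ← Finset.erase_eq]

private lemma prod_update_aux2 {n : ℕ} (s : Finset (Fin n)) (f g : Fin n → Fin 2 → ℂ)
    (i : Fin n → Fin 2) (k : Fin n) (a : Fin 2) (hk : k ∈ s) :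
    ∏ l ∈ s, (f l (Function.update i k a l) * g l (Function.update i k a l))
      = (f k a * g k a) * ∏ l ∈ s.erase k, (f l (i l) * g l (i l)) :=
  prod_update_aux s (fun l c => f l c * g l c) i k a hk

private lemma slice_det {n : ℕ} (x y : Fin n → Fin 2 → ℂ) (β : ℂ)
    (T : (Fin n → Fin 2) → ℂ)
    (hT : ∀ j, (∏ k, x k (j k)) + β * ∏ k, y k (j k) = T j)
    (i : Fin n → Fin 2) (q₁ q₂ : Fin n) (hq : q₁ ≠ q₂) :
    T (Function.update (Function.update i q₁ 0) q₂ 0) *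
        T (Function.update (Function.update i q₁ 1) q₂ 1)
      - T (Function.update (Function.update i q₁ 0) q₂ 1) *
        T (Function.update (Function.update i q₁ 1) q₂ 0)
      = β * (x q₁ 0 * y q₁ 1 - x q₁ 1 * y q₁ 0) * (x q₂ 0 * y q₂ 1 - x q₂ 1 * y q₂ 0)
        * ∏ l ∈ (Finset.univ.erase q₂).erase q₁, (x l (i l) * y l (i l)) := by
  have key : ∀ (f : Fin n → Fin 2 → ℂ) (a b : Fin 2),
      (∏ l, f l (Function.update (Function.update i q₁ a) q₂ b l))
        = f q₂ b * (f q₁ a * ∏ l ∈ (Finset.univ.erase q₂).erase q₁, f l (i l)) := by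
    intro f a b
    rw [prod_update_aux Finset.univ f _ q₂ b (Finset.mem_univ _),
      prod_update_aux (Finset.univ.erase q₂) f i q₁ a
        (Finset.mem_erase.mpr ⟨hq, Finset.mem_univ _⟩)]
  have hsplit : ∏ l ∈ (Finset.univ.erase q₂).erase q₁, (x l (i l) * y l (i l))
      = (∏ l ∈ (Finset.univ.erase q₂).erase q₁, x l (i l))
        * ∏ l ∈ (Finset.univ.erase q₂).erase q₁, y l (i l) := Finset.prod_mul_distrib
  rw [← hT, ← hT, ← hT, ← hT, key x, key x, key x, key x, key y, key y, key y, key y, hsplit]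
  ring

theorem phase_gate_state_not_lu_equivalent_to_conjugate (n : ℕ) (hn : 3 ≤ n) :
    ¬ ∃ U : Fin n → Matrix (Fin 2) (Fin 2) ℂ,
      (∀ k, U k ∈ Matrix.unitaryGroup (Fin 2) ℂ) ∧
      phaseGateState n =
        luApply U (fun i => starRingEnd ℂ (phaseGateState n i)) := by
  rintro ⟨U, hU, h⟩
  -- ## Step 1: the pointwise polynomial equation
  have main : ∀ i : Fin n → Fin 2,
      (∏ k, xv U k (i k)) + (-1 - Complex.I) * ∏ k, yv U k (i k)
        = (if i = (fun _ => (1 : Fin 2)) then Complex.I else 1) := by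
    set pc : ℂ := ((((2 : ℝ) ^ ((n : ℝ) / 2))⁻¹ : ℝ) : ℂ) with hpc
    have hp : pc ≠ 0 := by
      rw [hpc]
      simp only [ne_eq, Complex.ofReal_eq_zero, inv_eq_zero]
      exact ne_of_gt (Real.rpow_pos_of_pos two_pos _)
    have hconj : ∀ j : Fin n → Fin 2,
        starRingEnd ℂ (if j = (fun _ => (1 : Fin 2)) then Complex.I * pc else pc)
          = pc + (if j = (fun _ => (1 : Fin 2)) then (-1 - Complex.I) * pc else 0) := by
      intro j
      split
      · rw [_root_.map_mul]
        simp [Complex.conj_I, Complex.conj_ofReal, hpc]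
        ring
      · simp [Complex.conj_ofReal, hpc]
    have hswap : ∀ i : Fin n → Fin 2,
        ∑ j : Fin n → Fin 2, ∏ k, U k (i k) (j k)
          = ∏ k, (U k (i k) 0 + U k (i k) 1) := by
      intro i
      calc ∑ j : Fin n → Fin 2, ∏ k, U k (i k) (j k)
          = ∑ j ∈ Fintype.piFinset (fun _ => (Finset.univ : Finset (Fin 2))),
              ∏ k, U k (i k) (j k) := by rw [Fintype.piFinset_univ]
        _ = ∏ k, ∑ a ∈ Finset.univ, U k (i k) a := (Finset.prod_univ_sum _ _).symm
        _ = ∏ k, (U k (i k) 0 + U k (i k) 1) := by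
            refine Finset.prod_congr rfl fun k _ => ?_
            rw [Fin.sum_univ_two]
    intro i
    simp only [xv, yv]
    have h' := congrFun h i
    simp only [phaseGateState, luApply] at h'
    rw [← hpc] at h'
    simp only [hconj] at h'
    have hs : ∑ j : Fin n → Fin 2, (∏ k, U k (i k) (j k)) *
        (pc + (if j = (fun _ => (1 : Fin 2)) then (-1 - Complex.I) * pc else 0))
        = (∏ k, (U k (i k) 0 + U k (i k) 1)) * pc
          + (∏ k, U k (i k) 1) * ((-1 - Complex.I) * pc) := by
      have hterm : ∀ j : Fin n → Fin 2, (∏ k, U k (i k) (j k)) *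
          (pc + (if j = (fun _ => (1 : Fin 2)) then (-1 - Complex.I) * pc else 0))
          = (∏ k, U k (i k) (j k)) * pc
            + (if j = (fun _ => (1 : Fin 2)) then
                (∏ k, U k (i k) (j k)) * ((-1 - Complex.I) * pc) else 0) := by
        intro j; split <;> ring
      rw [Finset.sum_congr rfl fun j _ => hterm j, Finset.sum_add_distrib,
        Finset.sum_ite_eq' Finset.univ (fun _ => (1 : Fin 2))
          (fun j => (∏ k, U k (i k) (j k)) * ((-1 - Complex.I) * pc)),
        ← Finset.sum_mul, hswap]
      simp
    have hL : (if i = (fun _ => (1 : Fin 2)) then Complex.I * pc else pc)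
        = (if i = (fun _ => (1 : Fin 2)) then Complex.I else (1 : ℂ)) * pc := by
      split <;> ring
    rw [hL, hs] at h'
    apply mul_right_cancel₀ hp
    rw [add_mul]
    linear_combination -h'
  -- ## basic string facts
  have hones_ne : ∀ (j : Fin n → Fin 2) (k : Fin n), j k = 0 → j ≠ (fun _ => 1) := by
    intro j k hk hcontra
    rw [hcontra] at hk
    simp at hk
  have hIone : Complex.I - 1 ≠ 0 := by
    intro h0
    simpa using congrArg Complex.im h0
  -- ## Step 2: key structural facts about the local matrices
  have hkey : ∀ k : Fin n, xv U k 1 ≠ 0 ∧ yv U k 1 ≠ 0 ∧ xv U k 0 * yv U k 0 = 0 := by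
    intro k
    have hcard : 1 < (Finset.univ.erase k).card := by
      rw [Finset.card_erase_of_mem (Finset.mem_univ _), Finset.card_univ, Fintype.card_fin]
      omega
    obtain ⟨q₁, hq₁, q₂, hq₂, hq12⟩ := Finset.one_lt_card.mp hcard
    have hq₁k : q₁ ≠ k := (Finset.mem_erase.mp hq₁).1
    have hq₂k : q₂ ≠ k := (Finset.mem_erase.mp hq₂).1
    have hkS : k ∈ (Finset.univ.erase q₂).erase q₁ :=
      Finset.mem_erase.mpr ⟨Ne.symm hq₁k, Finset.mem_erase.mpr ⟨Ne.symm hq₂k, Finset.mem_univ _⟩⟩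
    -- slice at the all-ones string
    have h1 := slice_det (xv U) (yv U) (-1 - Complex.I)
      (fun j => if j = (fun _ => (1 : Fin 2)) then Complex.I else 1) main
      (fun _ => 1) q₁ q₂ hq12
    beta_reduce at h1
    have e1 : Function.update (fun _ => (1 : Fin 2)) q₁ 1 = (fun _ => (1 : Fin 2)) :=
      Function.update_eq_self q₁ _
    have e2 : Function.update (fun _ => (1 : Fin 2)) q₂ 1 = (fun _ => (1 : Fin 2)) :=
      Function.update_eq_self q₂ _
    have c00 : Function.update (Function.update (fun _ => (1 : Fin 2)) q₁ 0) q₂ 0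
        ≠ (fun _ => 1) := hones_ne _ q₂ (by rw [Function.update_self])
    have c01 : Function.update (Function.update (fun _ => (1 : Fin 2)) q₁ 0) q₂ 1
        ≠ (fun _ => 1) := hones_ne _ q₁
          (by rw [Function.update_of_ne hq12, Function.update_self])
    have c10 : Function.update (Function.update (fun _ => (1 : Fin 2)) q₁ 1) q₂ 0
        ≠ (fun _ => 1) := hones_ne _ q₂ (by rw [Function.update_self])
    rw [if_neg c00, if_neg c01, if_neg c10, e1, e2, if_pos rfl,
      ← Finset.mul_prod_erase _ _ hkS] at h1
    have fact1 : ((-1 - Complex.I) * (xv U q₁ 0 * yv U q₁ 1 - xv U q₁ 1 * yv U q₁ 0) *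
        (xv U q₂ 0 * yv U q₂ 1 - xv U q₂ 1 * yv U q₂ 0) *
        ∏ l ∈ ((Finset.univ.erase q₂).erase q₁).erase k, (xv U l 1 * yv U l 1)) *
        (xv U k 1 * yv U k 1) = Complex.I - 1 := by
      linear_combination -h1
    have hfact1ne : ((-1 - Complex.I) * (xv U q₁ 0 * yv U q₁ 1 - xv U q₁ 1 * yv U q₁ 0) *
        (xv U q₂ 0 * yv U q₂ 1 - xv U q₂ 1 * yv U q₂ 0) *
        ∏ l ∈ ((Finset.univ.erase q₂).erase q₁).erase k, (xv U l 1 * yv U l 1)) *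
        (xv U k 1 * yv U k 1) ≠ 0 := by rw [fact1]; exact hIone
    have hN : ((-1 - Complex.I) * (xv U q₁ 0 * yv U q₁ 1 - xv U q₁ 1 * yv U q₁ 0) *
        (xv U q₂ 0 * yv U q₂ 1 - xv U q₂ 1 * yv U q₂ 0) *
        ∏ l ∈ ((Finset.univ.erase q₂).erase q₁).erase k, (xv U l 1 * yv U l 1)) ≠ 0 :=
      (mul_ne_zero_iff.mp hfact1ne).1
    have hBk : xv U k 1 ≠ 0 := (mul_ne_zero_iff.mp (mul_ne_zero_iff.mp hfact1ne).2).1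
    have hDk : yv U k 1 ≠ 0 := (mul_ne_zero_iff.mp (mul_ne_zero_iff.mp hfact1ne).2).2
    -- slice at the string with a single zero at k
    have h2 := slice_det (xv U) (yv U) (-1 - Complex.I)
      (fun j => if j = (fun _ => (1 : Fin 2)) then Complex.I else 1) main
      (Function.update (fun _ => 1) k 0) q₁ q₂ hq12
    beta_reduce at h2
    have hk0 : ∀ a b : Fin 2,
        Function.update (Function.update (Function.update (fun _ => (1 : Fin 2)) k 0) q₁ a) q₂ b
          ≠ (fun _ => 1) := by
      intro a b
      apply hones_ne _ k
      rw [Function.update_of_ne (Ne.symm hq₂k), Function.update_of_ne (Ne.symm hq₁k),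
        Function.update_self]
    rw [if_neg (hk0 0 0), if_neg (hk0 1 1), if_neg (hk0 0 1), if_neg (hk0 1 0),
      prod_update_aux2 _ (xv U) (yv U) _ k 0 hkS] at h2
    have h2' : ((-1 - Complex.I) * (xv U q₁ 0 * yv U q₁ 1 - xv U q₁ 1 * yv U q₁ 0) *
        (xv U q₂ 0 * yv U q₂ 1 - xv U q₂ 1 * yv U q₂ 0) *
        ∏ l ∈ ((Finset.univ.erase q₂).erase q₁).erase k, (xv U l 1 * yv U l 1)) *
        (xv U k 0 * yv U k 0) = 0 := by linear_combination -h2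
    rcases mul_eq_zero.mp h2' with hbad | hgood
    · exact absurd hbad hN
    · exact ⟨hBk, hDk, hgood⟩
  -- ## Step 3: the basic equations at special strings
  have Eones : (∏ k, xv U k 1) + (-1 - Complex.I) * ∏ k, yv U k 1 = Complex.I := by
    have hm := main (fun _ => 1)
    rw [if_pos rfl] at hm
    exact hm
  have Esingle : ∀ k : Fin n,
      (xv U k 0 * ∏ l ∈ Finset.univ.erase k, xv U l 1)
        + (-1 - Complex.I) * (yv U k 0 * ∏ l ∈ Finset.univ.erase k, yv U l 1) = 1 := by
    intro k
    have hm := main (Function.update (fun _ => 1) k 0)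
    rw [prod_update_aux Finset.univ (xv U) (fun _ => 1) k 0 (Finset.mem_univ _),
      prod_update_aux Finset.univ (yv U) (fun _ => 1) k 0 (Finset.mem_univ _),
      if_neg (hones_ne _ k (by rw [Function.update_self]))] at hm
    exact hm
  have Edouble : ∀ k m : Fin n, k ≠ m →
      (xv U m 0 * (xv U k 0 * ∏ l ∈ (Finset.univ.erase m).erase k, xv U l 1))
        + (-1 - Complex.I) *
          (yv U m 0 * (yv U k 0 * ∏ l ∈ (Finset.univ.erase m).erase k, yv U l 1)) = 1 := by
    intro k m hkm
    have hm := main (Function.update (Function.update (fun _ => 1) k 0) m 0)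
    rw [prod_update_aux Finset.univ (xv U) _ m 0 (Finset.mem_univ _),
      prod_update_aux (Finset.univ.erase m) (xv U) _ k 0
        (Finset.mem_erase.mpr ⟨hkm, Finset.mem_univ _⟩),
      prod_update_aux Finset.univ (yv U) _ m 0 (Finset.mem_univ _),
      prod_update_aux (Finset.univ.erase m) (yv U) _ k 0
        (Finset.mem_erase.mpr ⟨hkm, Finset.mem_univ _⟩),
      if_neg (hones_ne _ m (by rw [Function.update_self]))] at hm
    exact hm
  -- two distinct indices
  have hn1 : 0 < n := by omega
  have hn2 : 1 < n := by omega
  set k₁ : Fin n := ⟨0, hn1⟩ with hk₁def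
  set k₂ : Fin n := ⟨1, hn2⟩ with hk₂def
  have hk12 : k₁ ≠ k₂ := Fin.ne_of_val_ne (by norm_num)
  have hk₂mem : k₂ ∈ Finset.univ.erase k₁ :=
    Finset.mem_erase.mpr ⟨Ne.symm hk12, Finset.mem_univ _⟩
  -- ## Step 4: case analysis
  by_cases hC : ∀ k : Fin n, yv U k 0 = 0
  · -- All second columns are (0, D k).  Unitarity forces B k = D k.
    have hBD : ∀ k : Fin n, xv U k 1 = yv U k 1 := by
      intro k
      have hu := (Unitary.mem_iff.mp (hU k)).1
      have h01 := congrFun (congrFun hu 0) 1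
      rw [Matrix.mul_apply, Fin.sum_univ_two, Matrix.star_apply, Matrix.star_apply,
        Matrix.one_apply_ne (by decide : (0 : Fin 2) ≠ 1)] at h01
      have hC' : U k 0 1 = 0 := hC k
      rw [hC', mul_zero, zero_add] at h01
      have hD : U k 1 1 ≠ 0 := (hkey k).2.1
      rcases mul_eq_zero.mp h01 with h10 | h11
      · have h10' : U k 1 0 = 0 := star_eq_zero.mp h10
        simp [xv, yv, h10']
      · exact absurd h11 hD
    have hyx : ∏ k, yv U k 1 = ∏ k, xv U k 1 :=
      Finset.prod_congr rfl fun k _ => (hBD k).symm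
    have e := Eones
    rw [hyx] at e
    have hPx : ∏ k, xv U k 1 = -1 := by
      have hI0 : (-Complex.I) ≠ 0 := neg_ne_zero.mpr Complex.I_ne_zero
      apply mul_left_cancel₀ hI0
      have : (-Complex.I) * ∏ k, xv U k 1 = Complex.I := by linear_combination e
      rw [this]; ring
    have E1 := Esingle k₁
    rw [hC k₁, zero_mul, mul_zero, add_zero,
      ← Finset.mul_prod_erase (Finset.univ.erase k₁) _ hk₂mem,
      Finset.erase_right_comm] at E1
    have E2 := Esingle k₂
    rw [hC k₂, zero_mul, mul_zero, add_zero] at E2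
    have ED := Edouble k₁ k₂ hk12
    rw [hC k₁, hC k₂, zero_mul, mul_zero, add_zero] at ED
    have hsub : (xv U k₁ 0 * ∏ l ∈ (Finset.univ.erase k₂).erase k₁, xv U l 1)
        * (xv U k₂ 1 - xv U k₂ 0) = 0 := by linear_combination E1 - ED
    have e1' : (xv U k₁ 0 * ∏ l ∈ (Finset.univ.erase k₂).erase k₁, xv U l 1) * xv U k₂ 1 = 1 := by
      linear_combination E1
    have hL0 := left_ne_zero_of_mul_eq_one e1'
    have hx20 : xv U k₂ 0 = xv U k₂ 1 := by
      rcases mul_eq_zero.mp hsub with hbad | hgood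
      · exact absurd hbad hL0
      · exact (sub_eq_zero.mp hgood).symm
    rw [hx20, Finset.mul_prod_erase Finset.univ (fun l => xv U l 1) (Finset.mem_univ k₂), hPx] at E2
    norm_num at E2
  · push_neg at hC
    obtain ⟨k₀, hk₀⟩ := hC
    have hA₀ : xv U k₀ 0 = 0 := by
      rcases mul_eq_zero.mp (hkey k₀).2.2 with h | h
      · exact h
      · exact absurd h hk₀
    by_cases hA : ∀ m : Fin n, xv U m 0 = 0
    · -- all row sums of the first rows vanish
      have Esingle' : ∀ k : Fin n,
          (-1 - Complex.I) * (yv U k 0 * ∏ l ∈ Finset.univ.erase k, yv U l 1) = 1 := by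
        intro k
        have := Esingle k
        rw [hA k, zero_mul, zero_add] at this
        exact this
      have hy0 : ∀ k : Fin n, yv U k 0 ≠ 0 := by
        intro k h0
        have := Esingle' k
        rw [h0, zero_mul, mul_zero] at this
        exact one_ne_zero this.symm
      have hBD2 : ∀ k : Fin n, xv U k 1 = 2 * yv U k 1 := by
        intro k
        have hu := (Unitary.mem_iff.mp (hU k)).2
        have h10 := congrFun (congrFun hu 1) 0
        rw [Matrix.mul_apply, Fin.sum_univ_two, Matrix.star_apply, Matrix.star_apply,
          Matrix.one_apply_ne (by decide : (1 : Fin 2) ≠ 0)] at h10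
        have h00 : U k 0 0 + U k 0 1 = 0 := hA k
        have hU00 : U k 0 0 = -(U k 0 1) := eq_neg_of_add_eq_zero_left h00
        rw [hU00, star_neg] at h10
        have hfac : (U k 1 1 - U k 1 0) * star (U k 0 1) = 0 := by linear_combination h10
        have hsne : star (U k 0 1) ≠ 0 := star_ne_zero.mpr (hy0 k)
        rcases mul_eq_zero.mp hfac with hgood | hbad
        · have h1110 : U k 1 0 = U k 1 1 := (sub_eq_zero.mp hgood).symm
          show U k 1 0 + U k 1 1 = 2 * U k 1 1
          rw [h1110]; ring
        · exact absurd hbad hsne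
      have E1 := Esingle' k₁
      rw [← Finset.mul_prod_erase (Finset.univ.erase k₁) _ hk₂mem,
        Finset.erase_right_comm] at E1
      have ED := Edouble k₁ k₂ hk12
      rw [hA k₁, hA k₂, zero_mul, zero_add] at ED
      have hsub : ((-1 - Complex.I) * (yv U k₁ 0 *
          ∏ l ∈ (Finset.univ.erase k₂).erase k₁, yv U l 1))
          * (yv U k₂ 1 - yv U k₂ 0) = 0 := by linear_combination E1 - ED
      have e1' : ((-1 - Complex.I) * (yv U k₁ 0 *
          ∏ l ∈ (Finset.univ.erase k₂).erase k₁, yv U l 1)) * yv U k₂ 1 = 1 := by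
        linear_combination E1
      have hL0 := left_ne_zero_of_mul_eq_one e1'
      have hy20 : yv U k₂ 0 = yv U k₂ 1 := by
        rcases mul_eq_zero.mp hsub with hbad | hgood
        · exact absurd hbad hL0
        · exact (sub_eq_zero.mp hgood).symm
      have hQ := Esingle' k₂
      rw [hy20, Finset.mul_prod_erase Finset.univ (fun l => yv U l 1) (Finset.mem_univ k₂)] at hQ
      -- hQ : (-1-I) * ∏ y = 1
      have hPB : ∏ k, xv U k 1 = (2 : ℂ) ^ n * ∏ k, yv U k 1 := by
        calc ∏ k, xv U k 1 = ∏ k, ((2 : ℂ) * yv U k 1) :=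
              Finset.prod_congr rfl fun k _ => hBD2 k
          _ = (∏ _k : Fin n, (2 : ℂ)) * ∏ k, yv U k 1 := Finset.prod_mul_distrib
          _ = (2 : ℂ) ^ n * ∏ k, yv U k 1 := by
              rw [Finset.prod_const, Finset.card_univ, Fintype.card_fin]
      have e := Eones
      rw [hPB] at e
      have h2n : (2 : ℂ) ^ n = 2 := by
        linear_combination (-1 - Complex.I) * e - (2 : ℂ) ^ n * hQ
          + (Complex.I + 1) * hQ - Complex.I_sq
      have h2n' : (2 : ℕ) ^ n = 2 := by exact_mod_cast h2n
      have hge : (2 : ℕ) ^ 3 ≤ 2 ^ n := Nat.pow_le_pow_right (by norm_num) hn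
      omega
    · push_neg at hA
      obtain ⟨m, hm⟩ := hA
      have hCm : yv U m 0 = 0 := by
        rcases mul_eq_zero.mp (hkey m).2.2 with h | h
        · exact absurd h hm
        · exact h
      have hkm : k₀ ≠ m := by
        intro he
        rw [he] at hA₀
        exact hm hA₀
      have := Edouble k₀ m hkm
      rw [hA₀, hCm] at this
      simp at this
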